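/- arXiv:2403.04345 — 3 statements merged into one kernel-verified Lean document; each statement's English description precedes it below -/
import Mathlib

section
/- If β ∈ (0,1), α = 1-β, and γ: ℕ → ℝ satisfies |γ(k)| ≤ γ(0) for all k, then lim_{t→∞} 2α² ∑_{k=0}^{t-2} γ(k) ∑_{i=0}^{t-2-k} β^{2i+k} = (2α/(2-α)) ∑_{k≥0} γ(k) β^k. -/
/-!
Summing the inner geometric series in `β²` gives
`(1 - β²) ∑_{i < n-k} β^(2i+k) = β^k - β^(2n-k)`, so with `n = t - 1` the expression equals
`2α/(2-α) · (∑_{k<n} γ k β^k - ∑_{k<n} γ k β^(2n-k))`, because `1 - β² = α (2 - α)`.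
The first sum tends to `∑' k, γ k β^k`; every term of the second is at most `γ 0 · β^n`
in absolute value, so the second sum is `O(n β^n)` and tends to `0`.
-/

open Filter Finset Topology

theorem one_sub_sq_mul_sum_range_pow_two_mul_add {R : Type*} [CommRing R] (β : R) {k n : ℕ}
    (hk : k ≤ n) :
    (1 - β ^ 2) * ∑ i ∈ range (n - k), β ^ (2 * i + k) = β ^ k - β ^ (2 * n - k) := by
  calc (1 - β ^ 2) * ∑ i ∈ range (n - k), β ^ (2 * i + k)
      = (∑ i ∈ range (n - k), (β ^ 2) ^ i) * (1 - β ^ 2) * β ^ k := by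
        simp only [pow_add, pow_mul, ← sum_mul]; ring
    _ = β ^ k - β ^ (2 * n - k) := by
        rw [geom_sum_mul_neg, ← pow_mul, show 2 * n - k = 2 * (n - k) + k by omega, pow_add]
        ring

theorem one_sub_sq_mul_sum_mul_sum_range_pow_two_mul_add {R : Type*} [CommRing R] (γ : ℕ → R)
    (β : R) (n : ℕ) :
    (1 - β ^ 2) * ∑ k ∈ range n, γ k * ∑ i ∈ range (n - k), β ^ (2 * i + k) =
      ∑ k ∈ range n, γ k * β ^ k - ∑ k ∈ range n, γ k * β ^ (2 * n - k) := by
  rw [mul_sum, ← sum_sub_distrib]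
  refine sum_congr rfl fun k hk => ?_
  rw [mul_left_comm, one_sub_sq_mul_sum_range_pow_two_mul_add β (mem_range.mp hk).le, mul_sub]

theorem summable_mul_pow_of_abs_le {γ : ℕ → ℝ} {C β : ℝ} (hγ : ∀ k, |γ k| ≤ C)
    (hβ : |β| < 1) : Summable fun k => γ k * β ^ k :=
  Summable.of_norm_bounded ((summable_geometric_of_lt_one (abs_nonneg β) hβ).mul_left C)
    fun k => by
      rw [Real.norm_eq_abs, abs_mul, abs_pow]
      exact mul_le_mul_of_nonneg_right (hγ k) (pow_nonneg (abs_nonneg β) k)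

theorem tendsto_sum_range_mul_pow_two_mul_sub {γ : ℕ → ℝ} {C β : ℝ}
    (hγ : ∀ k, |γ k| ≤ C) (hβ : |β| < 1) :
    Tendsto (fun n => ∑ k ∈ range n, γ k * β ^ (2 * n - k)) atTop (𝓝 0) := by
  have hC : 0 ≤ C := (abs_nonneg _).trans (hγ 0)
  have hterm : ∀ n, ∀ k ∈ range n, ‖γ k * β ^ (2 * n - k)‖ ≤ C * |β| ^ n :=
    fun n k hk => by
      rw [Real.norm_eq_abs, abs_mul, abs_pow]
      exact mul_le_mul (hγ k) (pow_le_pow_of_le_one (abs_nonneg β) hβ.le (by grind))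
        (by positivity) hC
  have hbound : Tendsto (fun n : ℕ => C * (n * |β| ^ n)) atTop (𝓝 0) := by
    simpa using (tendsto_self_mul_const_pow_of_lt_one (abs_nonneg β) hβ).const_mul C
  refine squeeze_zero_norm (fun n => ?_) hbound
  calc ‖∑ k ∈ range n, γ k * β ^ (2 * n - k)‖ ≤ ∑ k ∈ range n, C * |β| ^ n :=
        norm_sum_le_of_le _ (hterm n)
    _ = C * (n * |β| ^ n) := by rw [sum_const, card_range, nsmul_eq_mul]; ring

theorem covariance_term_limit (β α : ℝ) (hβ : β ∈ Set.Ioo (0:ℝ) 1) (hα : α = 1 - β)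
    (γ : ℕ → ℝ) (hγ : ∀ k, |γ k| ≤ γ 0) :
    Filter.Tendsto
      (fun t : ℕ => 2 * α ^ 2 * ∑ k ∈ Finset.range (t - 1), γ k *
        ∑ i ∈ Finset.range (t - 1 - k), β ^ (2 * i + k))
      Filter.atTop (nhds ((2 * α / (2 - α)) * ∑' k : ℕ, γ k * β ^ k)) := by
  obtain ⟨hβ0, hβ1⟩ := hβ
  subst hα
  have hβabs : |β| < 1 := abs_lt.mpr ⟨by linarith, hβ1⟩
  have hcoef : 2 * (1 - β) ^ 2 = 2 * (1 - β) / (2 - (1 - β)) * (1 - β ^ 2) := by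
    field_simp [show 2 - (1 - β) ≠ 0 by linarith]
    ring
  have hsplit := ((summable_mul_pow_of_abs_le hγ hβabs).hasSum.tendsto_sum_nat.sub
    (tendsto_sum_range_mul_pow_two_mul_sub hγ hβabs)).const_mul (2 * (1 - β) / (2 - (1 - β)))
  rw [sub_zero] at hsplit
  have hlim : Tendsto (fun n => 2 * (1 - β) ^ 2 *
      ∑ k ∈ range n, γ k * ∑ i ∈ range (n - k), β ^ (2 * i + k)) atTop
      (𝓝 (2 * (1 - β) / (2 - (1 - β)) * ∑' k, γ k * β ^ k)) :=
    hsplit.congr fun n => by rw [hcoef, mul_assoc, one_sub_sq_mul_sum_mul_sum_range_pow_two_mul_add]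
  exact hlim.comp (tendsto_sub_atTop_nat 1)
end

section
/- Main theorem: under trend-stationarity (X_t = m_t* + ε_t with (ε_t) weakly stationary, mean zero, autocovariance γ) and Lipschitz trend (|m_{t+1}* - m_t*| ≤ K for all t), the simple exponential smoothing iterates with m̂_1 = X_1 and α ∈ (0,1) satisfy limsup_{t→∞} E[(m̂_{t+1} - m_t*)²] ≤ (α/(2-α)) γ(0) + (2α/(2-α)) ∑_{k≥1} γ(k)(1-α)^k + ((1-α)²/α²) K². -/
/-!
Unrolling the recursion writes `m̂_{t+1}` as a weighted average of `X_1, …, X_t` with weights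
`α (1-α)^k`, except that the oldest observation keeps the leftover mass. The mean squared error is
the variance of `m̂_{t+1}` plus its squared bias `b_t = E m̂_{t+1} - m*_t`. Since
`b_{t+1} = (1-α) (b_t - (m*_{t+1} - m*_t))`, the bias stays below `(1-α) K / α`. The variance is
the quadratic form of `γ` in the weights; as `|γ| ≤ γ 0`, replacing the weights by the purely
geometric ones costs at most `2 γ(0) (1-α)^t`, and the geometric form converges to
`α² ∑_{i,j} (1-α)^(i+j) γ(j-i) = α/(2-α) (γ 0 + 2 ∑_{k ≥ 1} γ k (1-α)^k)`.
-/

open Filter Finset Topology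

lemma abs_le_apply_zero_of_posDef {γ : ℤ → ℝ} (hγeven : ∀ k, γ (-k) = γ k)
    (hγposdef : ∀ (n : ℕ) (c : Fin n → ℝ) (τ : Fin n → ℤ),
      0 ≤ ∑ i, ∑ j, c i * c j * γ (τ i - τ j)) (m : ℤ) : |γ m| ≤ γ 0 := by
  have hplus := hγposdef 2 ![1, 1] ![0, m]
  have hminus := hγposdef 2 ![1, -1] ![0, m]
  simp only [Fin.sum_univ_two, Matrix.cons_val_zero, Matrix.cons_val_one, sub_self, zero_sub,
    sub_zero, hγeven] at hplus hminus
  rw [abs_le]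
  constructor <;> linarith

lemma sum_sum_mul_le_of_le (s : Finset ℕ) {v w : ℕ → ℝ} {γ : ℤ → ℝ} (hv : ∀ k, 0 ≤ v k)
    (hvw : ∀ k, v k ≤ w k) (hγ : ∀ m, γ m ≤ γ 0) :
    ∑ k ∈ s, ∑ l ∈ s, w k * w l * γ ((l : ℤ) - k)
      ≤ ∑ k ∈ s, ∑ l ∈ s, v k * v l * γ ((l : ℤ) - k)
        + ((∑ k ∈ s, w k) ^ 2 - (∑ k ∈ s, v k) ^ 2) * γ 0 := by
  have hterm : ∀ k l, w k * w l * γ ((l : ℤ) - k)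
      ≤ v k * v l * γ ((l : ℤ) - k) + (w k * w l - v k * v l) * γ 0 := fun k l => by
    have hprod : v k * v l ≤ w k * w l := mul_le_mul (hvw k) (hvw l) (hv l) ((hv k).trans (hvw k))
    nlinarith [mul_le_mul_of_nonneg_left (hγ ((l : ℤ) - k)) (sub_nonneg.mpr hprod)]
  calc ∑ k ∈ s, ∑ l ∈ s, w k * w l * γ ((l : ℤ) - k)
      ≤ ∑ k ∈ s, ∑ l ∈ s, (v k * v l * γ ((l : ℤ) - k) + (w k * w l - v k * v l) * γ 0) :=
        sum_le_sum fun k _ => sum_le_sum fun l _ => hterm k l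
    _ = _ := by simp only [sum_add_distrib, ← sum_mul, sum_sub_distrib, ← sum_mul_sum, sq]

def natProdEquivMinSub : ℕ × ℕ ≃ ℕ × ℤ where
  toFun p := (min p.1 p.2, (p.2 : ℤ) - p.1)
  invFun q := (q.1 + (-q.2).toNat, q.1 + q.2.toNat)
  left_inv p := by ext <;> simp <;> omega
  right_inv q := by ext <;> simp; omega

section GeometricAutocovariance

variable {a C : ℝ} {γ : ℤ → ℝ}

lemma summable_pow_natAbs (ha0 : 0 ≤ a) (ha1 : a < 1) : Summable (fun d : ℤ => a ^ d.natAbs) :=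
  Summable.of_nat_of_neg (by simpa using summable_geometric_of_lt_one ha0 ha1)
    (by simpa using summable_geometric_of_lt_one ha0 ha1)

lemma summable_pow_mul_pow_mul (ha0 : 0 ≤ a) (ha1 : a < 1) (hγ : ∀ m, |γ m| ≤ C) :
    Summable (fun p : ℕ × ℕ => a ^ p.1 * a ^ p.2 * γ ((p.2 : ℤ) - p.1)) := by
  have hgeo := summable_geometric_of_lt_one ha0 ha1
  refine Summable.of_norm_bounded
    ((hgeo.mul_of_nonneg hgeo (fun _ => by positivity) fun _ => by positivity).mul_right C)
    fun p => ?_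
  rw [norm_mul, Real.norm_of_nonneg (by positivity), Real.norm_eq_abs]
  exact mul_le_mul_of_nonneg_left (hγ _) (by positivity)

lemma tsum_pow_mul_pow_mul (ha0 : 0 ≤ a) (ha1 : a < 1) (hγeven : ∀ k, γ (-k) = γ k)
    (hγ : ∀ m, |γ m| ≤ C) :
    ∑' p : ℕ × ℕ, a ^ p.1 * a ^ p.2 * γ ((p.2 : ℤ) - p.1)
      = (γ 0 + 2 * ∑' k : ℕ, γ ((k : ℤ) + 1) * a ^ (k + 1)) / (1 - a ^ 2) := by
  set g : ℤ → ℝ := fun d => a ^ d.natAbs * γ d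
  have hg : Summable (fun d => ‖g d‖) := by
    refine Summable.of_nonneg_of_le (fun _ => norm_nonneg _) (fun d => ?_)
      ((summable_pow_natAbs ha0 ha1).mul_left C)
    rw [norm_mul, Real.norm_of_nonneg (by positivity), Real.norm_eq_abs, mul_comm]
    exact mul_le_mul_of_nonneg_right (hγ d) (by positivity)
  have hgeven : g.Even := fun d => by simp [g, hγeven]
  have ha2 : a ^ 2 < 1 := by nlinarith
  have hgeo : Summable (fun m : ℕ => ‖(a ^ 2) ^ m‖) := by
    simpa using summable_geometric_of_lt_one (by positivity) ha2
  -- in the coordinates `(min i j, j - i)` the double series factors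
  have hfactor : ∀ q : ℕ × ℤ, (fun p : ℕ × ℕ => a ^ p.1 * a ^ p.2 * γ ((p.2 : ℤ) - p.1))
      (natProdEquivMinSub.symm q) = (a ^ 2) ^ q.1 * g q.2 := by
    rintro ⟨m, d⟩
    simp only [natProdEquivMinSub, Equiv.coe_fn_symm_mk, g]
    rw [show (((m + d.toNat : ℕ) : ℤ) - ((m + (-d).toNat : ℕ) : ℤ)) = d by omega,
      ← pow_mul, ← pow_add, ← mul_assoc, ← pow_add]
    congr 2
    omega
  have hnatAbs : ∀ n : ℕ, ((n : ℤ) + 1).natAbs = n + 1 := fun n => by omega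
  rw [← natProdEquivMinSub.symm.tsum_eq, tsum_congr hfactor,
    ← tsum_mul_tsum_of_summable_norm hgeo hg, tsum_geometric_of_lt_one (by positivity) ha2,
    tsum_int_eq_zero_add_two_mul_tsum_pnat hgeven hg.of_norm,
    tsum_pnat_eq_tsum_succ (f := fun n : ℕ => g n)]
  simp [g, hnatAbs, mul_comm, div_eq_mul_inv]

end GeometricAutocovariance

lemma tendsto_sum_range_sum_range {F : ℕ × ℕ → ℝ} (hF : Summable F) :
    Tendsto (fun n => ∑ i ∈ range n, ∑ j ∈ range n, F (i, j)) atTop (𝓝 (∑' p, F p)) := by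
  simp_rw [← Finset.sum_product']
  refine hF.hasSum.comp (tendsto_atTop_finset_of_monotone
    (fun m n hmn => product_subset_product (range_mono hmn) (range_mono hmn)) fun p => ?_)
  exact ⟨p.1 + p.2 + 1, by simp only [mem_product, mem_range]; omega⟩

lemma limsup_le_of_eventually_le_of_tendsto {f u : ℕ → ℝ} {L : ℝ}
    (hf : IsBoundedUnder (· ≥ ·) atTop f) (hfu : ∀ᶠ n in atTop, f n ≤ u n)
    (hu : Tendsto u atTop (𝓝 L)) : limsup f atTop ≤ L :=
  (limsup_le_limsup hfu hf.isCoboundedUnder_le hu.isBoundedUnder_le).trans hu.limsup_eq.le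

/-- The weight of `x (n + 1 - k)` in `y (n + 2)` when `y` smooths `x` starting from `y 1 = x 1`
(see `eq_sum_sesWeight`). -/
noncomputable def sesWeight (α : ℝ) (n k : ℕ) : ℝ := if k = n then (1 - α) ^ n else α * (1 - α) ^ k

section SesWeight

variable {α : ℝ} {n k : ℕ}

lemma sesWeight_self : sesWeight α n n = (1 - α) ^ n := if_pos rfl

lemma sesWeight_of_lt (hk : k < n) : sesWeight α n k = α * (1 - α) ^ k := if_neg hk.ne

lemma sesWeight_succ_zero : sesWeight α (n + 1) 0 = α := by simp [sesWeight]

lemma sesWeight_succ_succ : sesWeight α (n + 1) (k + 1) = (1 - α) * sesWeight α n k := by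
  by_cases hk : k = n <;> simp [sesWeight, hk, pow_succ] <;> ring

lemma mul_pow_le_sesWeight (hα1 : α ≤ 1) : α * (1 - α) ^ k ≤ sesWeight α n k := by
  unfold sesWeight
  split_ifs with hk
  · subst hk
    exact mul_le_of_le_one_left (pow_nonneg (by linarith) k) hα1
  · exact le_rfl

lemma sum_sesWeight (α : ℝ) (n : ℕ) : ∑ k ∈ range (n + 1), sesWeight α n k = 1 := by
  have hgeom := mul_neg_geom_sum (1 - α) n
  rw [sub_sub_cancel] at hgeom
  rw [sum_range_succ, sum_congr rfl fun k hk => sesWeight_of_lt (mem_range.mp hk), ← mul_sum,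
    sesWeight_self, hgeom, sub_add_cancel]

end SesWeight

section Smoothing

variable {α K : ℝ} {x y : ℕ → ℝ}

lemma eq_sum_sesWeight (h1 : y 1 = x 1) (hrec : ∀ t ≥ 1, y (t + 1) = (1 - α) * y t + α * x t)
    (n : ℕ) : y (n + 2) = ∑ k ∈ range (n + 1), sesWeight α n k * x (n + 1 - k) := by
  induction n with
  | zero => simp [hrec 1 le_rfl, h1, sesWeight]; ring
  | succ n ih =>
    rw [sum_range_succ' (fun k => sesWeight α (n + 1) k * x (n + 1 + 1 - k)),
      hrec (n + 2) (by omega), ih, sesWeight_succ_zero, mul_sum]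
    simp only [sesWeight_succ_succ, mul_assoc, Nat.add_sub_add_right]
    rfl

lemma abs_ses_sub_le (hα0 : 0 < α) (hα1 : α ≤ 1) (h1 : y 1 = x 1)
    (hrec : ∀ t ≥ 1, y (t + 1) = (1 - α) * y t + α * x t)
    (hLip : ∀ t ≥ 1, |x (t + 1) - x t| ≤ K) {t : ℕ} (ht : 1 ≤ t) :
    |y (t + 1) - x t| ≤ (1 - α) / α * K := by
  have hK : 0 ≤ K := (abs_nonneg _).trans (hLip 1 le_rfl)
  induction t, ht using Nat.le_induction with
  | base =>
    rw [hrec 1 le_rfl, h1, show (1 - α) * x 1 + α * x 1 - x 1 = 0 by ring, abs_zero]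
    exact mul_nonneg (div_nonneg (by linarith) hα0.le) hK
  | succ t ht ih =>
    calc |y (t + 1 + 1) - x (t + 1)|
        = (1 - α) * |(y (t + 1) - x t) - (x (t + 1) - x t)| := by
          rw [hrec (t + 1) (by omega), ← abs_of_nonneg (sub_nonneg.mpr hα1), ← abs_mul,
            abs_of_nonneg (sub_nonneg.mpr hα1)]
          congr 1
          ring
      _ ≤ (1 - α) * ((1 - α) / α * K + K) :=
          mul_le_mul_of_nonneg_left ((abs_sub _ _).trans (add_le_add ih (hLip t ht)))
            (sub_nonneg.mpr hα1)
      _ = (1 - α) / α * K := by field_simp; ring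

end Smoothing

open MeasureTheory

section Probability

open ProbabilityTheory

variable {Ω : Type*} [MeasurableSpace Ω] {μ : Measure Ω}

lemma integral_sub_sq_eq_variance_add [IsProbabilityMeasure μ] {Z : Ω → ℝ} (hZ : MemLp Z 2 μ)
    (c : ℝ) : ∫ ω, (Z ω - c) ^ 2 ∂μ = Var[Z; μ] + (μ[Z] - c) ^ 2 := by
  have hZc : MemLp (fun ω => Z ω - c) 2 μ := hZ.sub (memLp_const c)
  rw [← variance_sub_const hZ.aestronglyMeasurable c, variance_eq_sub hZc,
    integral_sub (hZ.integrable one_le_two) (integrable_const c)]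
  simp

variable {α : ℝ} {X mhat : ℕ → Ω → ℝ} {mstar : ℕ → ℝ}

lemma memLp_ses (hX2 : ∀ t, MemLp (X t) 2 μ) (hinit : mhat 1 = X 1)
    (hrec : ∀ t ≥ 1, ∀ ω, mhat (t + 1) ω = (1 - α) * mhat t ω + α * X t ω) {t : ℕ} (ht : 1 ≤ t) :
    MemLp (mhat t) 2 μ := by
  induction t, ht using Nat.le_induction with
  | base => exact hinit ▸ hX2 1
  | succ t ht ih =>
    rw [funext (hrec t ht)]
    exact (ih.const_mul _).add ((hX2 t).const_mul _)

variable [IsFiniteMeasure μ]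

lemma abs_integral_ses_sub_le {K : ℝ} (hα0 : 0 < α) (hα1 : α ≤ 1)
    (hX2 : ∀ t, MemLp (X t) 2 μ) (hmean : ∀ t ≥ 1, ∫ ω, X t ω ∂μ = mstar t)
    (hLip : ∀ t ≥ 1, |mstar (t + 1) - mstar t| ≤ K) (hinit : mhat 1 = X 1)
    (hrec : ∀ t ≥ 1, ∀ ω, mhat (t + 1) ω = (1 - α) * mhat t ω + α * X t ω) {t : ℕ} (ht : 1 ≤ t) :
    |∫ ω, mhat (t + 1) ω ∂μ - mstar t| ≤ (1 - α) / α * K := by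
  refine abs_ses_sub_le hα0 hα1 (y := fun t => ∫ ω, mhat t ω ∂μ) (by rw [hinit, hmean 1 le_rfl])
    (fun s hs => ?_) hLip ht
  rw [funext (hrec s hs),
    integral_add (((memLp_ses hX2 hinit hrec hs).integrable one_le_two).const_mul _)
      (((hX2 s).integrable one_le_two).const_mul _),
    integral_const_mul, integral_const_mul, hmean s hs]

variable {γ : ℤ → ℝ}

lemma variance_ses_eq (hX2 : ∀ t, MemLp (X t) 2 μ) (hmean : ∀ t ≥ 1, ∫ ω, X t ω ∂μ = mstar t)
    (hcov : ∀ t ≥ 1, ∀ s ≥ 1,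
      ∫ ω, (X t ω - mstar t) * (X s ω - mstar s) ∂μ = γ ((t : ℤ) - (s : ℤ)))
    (hinit : mhat 1 = X 1)
    (hrec : ∀ t ≥ 1, ∀ ω, mhat (t + 1) ω = (1 - α) * mhat t ω + α * X t ω) (n : ℕ) :
    Var[mhat (n + 2); μ] = ∑ k ∈ range (n + 1), ∑ l ∈ range (n + 1),
      sesWeight α n k * sesWeight α n l * γ ((l : ℤ) - k) := by
  have hclosed : mhat (n + 2) = fun ω => ∑ k ∈ range (n + 1), sesWeight α n k * X (n + 1 - k) ω :=
    funext fun ω => eq_sum_sesWeight (x := fun t => X t ω) (y := fun t => mhat t ω)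
      (congrFun hinit ω) (fun t ht => hrec t ht ω) n
  rw [hclosed, variance_fun_sum' fun k _ => (hX2 _).const_mul _]
  refine sum_congr rfl fun k hk => sum_congr rfl fun l hl => ?_
  have hk := mem_range.mp hk
  have hl := mem_range.mp hl
  rw [covariance_const_mul_left, covariance_const_mul_right, covariance,
    hmean _ (by omega), hmean _ (by omega), hcov _ (by omega) _ (by omega), mul_assoc]
  congr 3
  omega

lemma variance_ses_le (hα0 : 0 ≤ α) (hα1 : α ≤ 1) (hγ : ∀ m, |γ m| ≤ γ 0)
    (hX2 : ∀ t, MemLp (X t) 2 μ) (hmean : ∀ t ≥ 1, ∫ ω, X t ω ∂μ = mstar t)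
    (hcov : ∀ t ≥ 1, ∀ s ≥ 1,
      ∫ ω, (X t ω - mstar t) * (X s ω - mstar s) ∂μ = γ ((t : ℤ) - (s : ℤ)))
    (hinit : mhat 1 = X 1)
    (hrec : ∀ t ≥ 1, ∀ ω, mhat (t + 1) ω = (1 - α) * mhat t ω + α * X t ω) (n : ℕ) :
    Var[mhat (n + 2); μ] ≤ α ^ 2 * ∑ i ∈ range (n + 1), ∑ j ∈ range (n + 1),
      (1 - α) ^ i * (1 - α) ^ j * γ ((j : ℤ) - i) + 2 * γ 0 * (1 - α) ^ (n + 1) := by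
  have hcmp := sum_sum_mul_le_of_le (range (n + 1)) (v := fun k => α * (1 - α) ^ k)
    (w := sesWeight α n) (fun k => mul_nonneg hα0 (pow_nonneg (by linarith) k))
    (fun k => mul_pow_le_sesWeight hα1) (fun m => (le_abs_self _).trans (hγ m))
  have hgeomForm : ∑ k ∈ range (n + 1), ∑ l ∈ range (n + 1),
      α * (1 - α) ^ k * (α * (1 - α) ^ l) * γ ((l : ℤ) - k)
      = α ^ 2 * ∑ i ∈ range (n + 1), ∑ j ∈ range (n + 1),
          (1 - α) ^ i * (1 - α) ^ j * γ ((j : ℤ) - i) := by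
    simp only [mul_sum]
    exact sum_congr rfl fun i _ => sum_congr rfl fun j _ => by ring
  have hgeomSum : ∑ k ∈ range (n + 1), α * (1 - α) ^ k = 1 - (1 - α) ^ (n + 1) := by
    rw [← mul_sum, ← mul_neg_geom_sum, sub_sub_cancel]
  have hγ0 : 0 ≤ γ 0 := (abs_nonneg _).trans (hγ 0)
  rw [variance_ses_eq hX2 hmean hcov hinit hrec]
  refine hcmp.trans ?_
  rw [hgeomForm, sum_sesWeight, hgeomSum]
  nlinarith [mul_nonneg (sq_nonneg ((1 - α) ^ (n + 1))) hγ0]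

lemma integral_ses_sub_sq_le [IsProbabilityMeasure μ] {K : ℝ} (hα0 : 0 < α) (hα1 : α ≤ 1)
    (hγ : ∀ m, |γ m| ≤ γ 0) (hX2 : ∀ t, MemLp (X t) 2 μ)
    (hmean : ∀ t ≥ 1, ∫ ω, X t ω ∂μ = mstar t)
    (hcov : ∀ t ≥ 1, ∀ s ≥ 1,
      ∫ ω, (X t ω - mstar t) * (X s ω - mstar s) ∂μ = γ ((t : ℤ) - (s : ℤ)))
    (hLip : ∀ t ≥ 1, |mstar (t + 1) - mstar t| ≤ K) (hinit : mhat 1 = X 1)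
    (hrec : ∀ t ≥ 1, ∀ ω, mhat (t + 1) ω = (1 - α) * mhat t ω + α * X t ω) (n : ℕ) :
    ∫ ω, (mhat (n + 2) ω - mstar (n + 1)) ^ 2 ∂μ
      ≤ α ^ 2 * ∑ i ∈ range (n + 1), ∑ j ∈ range (n + 1),
          (1 - α) ^ i * (1 - α) ^ j * γ ((j : ℤ) - i)
        + 2 * γ 0 * (1 - α) ^ (n + 1) + ((1 - α) / α * K) ^ 2 := by
  have hbias := abs_integral_ses_sub_le hα0 hα1 hX2 hmean hLip hinit hrec (by omega : 1 ≤ n + 1)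
  rw [integral_sub_sq_eq_variance_add (memLp_ses hX2 hinit hrec (by omega))]
  exact add_le_add (variance_ses_le hα0.le hα1 hγ hX2 hmean hcov hinit hrec n)
    (by simpa only [sq_abs] using pow_le_pow_left₀ (abs_nonneg _) hbias 2)

end Probability

theorem ses_main_theorem_general {Ω : Type*} [MeasurableSpace Ω] (ℙ : Measure Ω)
    [IsProbabilityMeasure ℙ]
    (α K : ℝ) (hα : α ∈ Set.Ioo (0:ℝ) 1)
    (X : ℕ → Ω → ℝ) (mstar : ℕ → ℝ) (γ : ℤ → ℝ)
    (hγeven : ∀ k : ℤ, γ (-k) = γ k)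
    (hγposdef : ∀ (n : ℕ) (c : Fin n → ℝ) (τ : Fin n → ℤ),
      0 ≤ ∑ i, ∑ j, c i * c j * γ (τ i - τ j))
    (hX2 : ∀ t, MemLp (X t) 2 ℙ)
    (hmean : ∀ t ≥ 1, ∫ ω, X t ω ∂ℙ = mstar t)
    (hcov : ∀ t ≥ 1, ∀ s ≥ 1,
      ∫ ω, (X t ω - mstar t) * (X s ω - mstar s) ∂ℙ = γ ((t : ℤ) - (s : ℤ)))
    (hLip : ∀ t ≥ 1, |mstar (t + 1) - mstar t| ≤ K)
    (mhat : ℕ → Ω → ℝ) (hinit : mhat 1 = X 1)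
    (hrec : ∀ t ≥ 1, ∀ ω, mhat (t + 1) ω = (1 - α) * mhat t ω + α * X t ω) :
    Filter.limsup (fun t : ℕ => ∫ ω, (mhat (t + 1) ω - mstar t) ^ 2 ∂ℙ) Filter.atTop
      ≤ (α / (2 - α)) * γ 0
        + (2 * α / (2 - α)) * ∑' k : ℕ, γ ((k : ℤ) + 1) * (1 - α) ^ (k + 1)
        + ((1 - α) ^ 2 / α ^ 2) * K ^ 2 := by
  obtain ⟨hα0, hα1⟩ := hα
  have hγ := abs_le_apply_zero_of_posDef hγeven hγposdef
  set S : ℕ → ℝ := fun t =>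
    ∑ i ∈ range t, ∑ j ∈ range t, (1 - α) ^ i * (1 - α) ^ j * γ ((j : ℤ) - i)
  have ha0 : 0 ≤ 1 - α := by linarith
  have ha1 : 1 - α < 1 := by linarith
  have hlim : Tendsto (fun t => α ^ 2 * S t + 2 * γ 0 * (1 - α) ^ t + ((1 - α) / α * K) ^ 2) atTop
      (𝓝 (α ^ 2 * ∑' p : ℕ × ℕ, (1 - α) ^ p.1 * (1 - α) ^ p.2 * γ ((p.2 : ℤ) - p.1)
        + 2 * γ 0 * 0 + ((1 - α) / α * K) ^ 2)) :=
    (((tendsto_sum_range_sum_range (summable_pow_mul_pow_mul ha0 ha1 hγ)).const_mul _).add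
      ((tendsto_pow_atTop_nhds_zero_of_lt_one ha0 ha1).const_mul _)).add_const _
  refine (limsup_le_of_eventually_le_of_tendsto (isBoundedUnder_of_eventually_ge
      (Eventually.of_forall fun t => integral_nonneg fun ω => sq_nonneg _))
    (eventually_atTop.mpr ⟨1, fun t ht => ?_⟩) hlim).trans_eq ?_
  · obtain ⟨n, rfl⟩ := Nat.exists_eq_add_of_le' ht
    exact integral_ses_sub_sq_le hα0 hα1.le hγ hX2 hmean hcov hLip hinit hrec n
  · rw [tsum_pow_mul_pow_mul ha0 ha1 hγeven hγ,
      show 1 - (1 - α) ^ 2 = α * (2 - α) by ring]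
    have h2α : (2 : ℝ) - α ≠ 0 := by linarith
    field_simp
    ring

theorem ses_main_theorem {Ω : Type*} [MeasurableSpace Ω] (ℙ : Measure Ω)
    [IsProbabilityMeasure ℙ]
    (α K : ℝ) (hα : α ∈ Set.Ioo (0:ℝ) 1) (hK : 0 < K)
    (X : ℕ → Ω → ℝ) (mstar : ℕ → ℝ) (γ : ℤ → ℝ)
    (hγeven : ∀ k : ℤ, γ (-k) = γ k)
    (hγposdef : ∀ (n : ℕ) (c : Fin n → ℝ) (τ : Fin n → ℤ),
      0 ≤ ∑ i, ∑ j, c i * c j * γ (τ i - τ j))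
    (hX2 : ∀ t, MemLp (X t) 2 ℙ)
    (hmean : ∀ t ≥ 1, ∫ ω, X t ω ∂ℙ = mstar t)
    (hcov : ∀ t ≥ 1, ∀ s ≥ 1,
      ∫ ω, (X t ω - mstar t) * (X s ω - mstar s) ∂ℙ = γ ((t : ℤ) - (s : ℤ)))
    (hLip : ∀ t ≥ 1, |mstar (t + 1) - mstar t| ≤ K)
    (mhat : ℕ → Ω → ℝ) (hinit : mhat 1 = X 1)
    (hrec : ∀ t ≥ 1, ∀ ω, mhat (t + 1) ω = (1 - α) * mhat t ω + α * X t ω) :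
    Filter.limsup (fun t : ℕ => ∫ ω, (mhat (t + 1) ω - mstar t) ^ 2 ∂ℙ) Filter.atTop
      ≤ (α / (2 - α)) * γ 0
        + (2 * α / (2 - α)) * ∑' k : ℕ, γ ((k : ℤ) + 1) * (1 - α) ^ (k + 1)
        + ((1 - α) ^ 2 / α ^ 2) * K ^ 2 :=
  ses_main_theorem_general ℙ α K hα X mstar γ hγeven hγposdef hX2 hmean hcov hLip mhat hinit hrec
end

section
/- For the iid Gaussian case (γ(k) = 0 for k ≥ 1), the main bound specializes to limsup_{t→∞} E[(m̂_{t+1} - m_t*)²] ≤ (α/(2-α)) σ² + ((1-α)²/α²) K², where σ² = Var(ε_t). -/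
/-!
Split the error as `m̂_{t+1} - m*_t = (m̂_{t+1} - E m̂_{t+1}) + b_t` with the bias
`b_t = E m̂_{t+1} - m*_t`, so that the mean squared error is `Var m̂_{t+1} + b_t²`.
For `t ≥ 2` the estimate `m̂_t` is a combination of `X_1, …, X_{t-1}` only, hence uncorrelated
with `X_t`, and the variance obeys `v_{t+1} = (1-α)² v_t + α² σ²`; it converges geometrically to
the fixed point `α² σ² / (1 - (1-α)²) = α σ² / (2-α)`. The bias starts at `b_1 = 0` and satisfies
`|b_{t+1}| ≤ (1-α) (|b_t| + K)`, so it never exceeds the fixed point `(1-α) K / α`.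
-/

open MeasureTheory Filter

section AffineRecurrence

variable {a c : ℝ} {u : ℕ → ℝ}

lemma le_add_pow_mul_of_le_mul_add (ha : 0 ≤ a) (ha1 : a ≠ 1)
    (hu : ∀ n, u (n + 1) ≤ a * u n + c) (n : ℕ) :
    u n ≤ c / (1 - a) + a ^ n * (u 0 - c / (1 - a)) := by
  have hfix : a * (c / (1 - a)) + c = c / (1 - a) := by
    field_simp [sub_ne_zero.2 ha1.symm]
    ring
  induction n with
  | zero => simp
  | succ n ih =>
    calc u (n + 1) ≤ a * u n + c := hu n
      _ ≤ a * (c / (1 - a) + a ^ n * (u 0 - c / (1 - a))) + c := by gcongr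
      _ = c / (1 - a) + a ^ (n + 1) * (u 0 - c / (1 - a)) := by linear_combination hfix

lemma le_of_le_mul_add (ha : 0 ≤ a) (ha1 : a < 1) (hu : ∀ n, u (n + 1) ≤ a * u n + c)
    (h0 : u 0 ≤ c / (1 - a)) (n : ℕ) : u n ≤ c / (1 - a) := by
  have := le_add_pow_mul_of_le_mul_add ha ha1.ne hu n
  nlinarith [pow_nonneg ha n]

end AffineRecurrence

lemma limsup_le_of_le_add_pow_mul {f : ℕ → ℝ} {a b L M : ℝ} (hf : ∀ n, b ≤ f n)
    (ha : 0 ≤ a) (ha1 : a < 1) (hle : ∀ n, f (n + 1) ≤ L + a ^ n * M) :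
    limsup f atTop ≤ L := by
  have hlim : Tendsto (fun n : ℕ => L + a ^ n * M) atTop (nhds L) := by
    simpa using (tendsto_pow_atTop_nhds_zero_of_lt_one ha ha1).mul_const M |>.const_add L
  rw [← limsup_nat_add f 1, ← hlim.limsup_eq]
  exact limsup_le_limsup (Eventually.of_forall hle)
    (isCoboundedUnder_le_of_le atTop fun n => hf (n + 1)) hlim.isBoundedUnder_le

namespace ProbabilityTheory

lemma integral_sub_const_sq {Ω : Type*} [MeasurableSpace Ω] {μ : Measure Ω}
    [IsProbabilityMeasure μ] {f : Ω → ℝ} (hf : MemLp f 2 μ) (c : ℝ) :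
    ∫ ω, (f ω - c) ^ 2 ∂μ = Var[f; μ] + (μ[f] - c) ^ 2 := by
  have h : Var[fun ω => f ω - c; μ] = μ[(fun ω => f ω - c) ^ 2] - μ[fun ω => f ω - c] ^ 2 :=
    variance_eq_sub (hf.sub (memLp_const c))
  rw [variance_sub_const hf.aestronglyMeasurable, integral_sub (hf.integrable one_le_two)
    (integrable_const c), integral_const, probReal_univ, one_smul] at h
  rw [h]
  simp

end ProbabilityTheory

structure IsExpSmoothing {Ω : Type*} (α : ℝ) (X m : ℕ → Ω → ℝ) : Prop where
  init : m 1 = X 1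
  succ : ∀ t ≥ 1, m (t + 1) = (1 - α) • m t + α • X t

namespace IsExpSmoothing

open ProbabilityTheory

variable {Ω : Type*} {α : ℝ} {X m : ℕ → Ω → ℝ}

lemma two_eq (h : IsExpSmoothing α X m) : m 2 = X 1 := by
  rw [h.succ 1 le_rfl, h.init, ← add_smul]
  simp

variable [MeasurableSpace Ω] {μ : Measure Ω}

lemma memLp_two (h : IsExpSmoothing α X m) (hX : ∀ t, MemLp (X t) 2 μ) :
    ∀ t ≥ 1, MemLp (m t) 2 μ := by
  intro t ht
  induction t, ht using Nat.le_induction with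
  | base => exact h.init ▸ hX 1
  | succ t ht ih => exact h.succ t ht ▸ (ih.const_smul _).add ((hX t).const_smul _)

variable [IsFiniteMeasure μ]

lemma integral_succ (h : IsExpSmoothing α X m) (hX : ∀ t, MemLp (X t) 2 μ) (t : ℕ)
    (ht : 1 ≤ t) : μ[m (t + 1)] = (1 - α) * μ[m t] + α * μ[X t] := by
  simp only [h.succ t ht, Pi.add_apply, Pi.smul_apply, smul_eq_mul]
  rw [integral_add, integral_const_mul, integral_const_mul]
  · exact ((h.memLp_two hX t ht).integrable one_le_two).const_mul _
  · exact ((hX t).integrable one_le_two).const_mul _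

lemma covariance_eq_zero (h : IsExpSmoothing α X m) (hX : ∀ t, MemLp (X t) 2 μ)
    (hunc : ∀ t ≥ 1, ∀ s ≥ 1, t ≠ s → cov[X t, X s; μ] = 0) :
    ∀ t ≥ 2, ∀ s ≥ t, cov[m t, X s; μ] = 0 := by
  intro t ht
  induction t, ht using Nat.le_induction with
  | base =>
    intro s hs
    rw [h.two_eq]
    exact hunc 1 le_rfl s (by omega) (by omega)
  | succ t ht ih =>
    intro s hs
    rw [h.succ t (by omega), covariance_add_left ((h.memLp_two hX t (by omega)).const_smul _)
      ((hX t).const_smul _) (hX s), covariance_smul_left, covariance_smul_left, ih s (by omega),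
      hunc t (by omega) s (by omega) (by omega)]
    simp

lemma variance_succ (h : IsExpSmoothing α X m) (hX : ∀ t, MemLp (X t) 2 μ)
    (hunc : ∀ t ≥ 1, ∀ s ≥ 1, t ≠ s → cov[X t, X s; μ] = 0) (t : ℕ) (ht : 2 ≤ t) :
    Var[m (t + 1); μ] = (1 - α) ^ 2 * Var[m t; μ] + α ^ 2 * Var[X t; μ] := by
  rw [h.succ t (by omega), variance_add ((h.memLp_two hX t (by omega)).const_smul _)
    ((hX t).const_smul _), variance_smul, variance_smul, covariance_smul_left,
    covariance_smul_right, h.covariance_eq_zero hX hunc t ht t le_rfl]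
  ring

lemma variance_le (h : IsExpSmoothing α X m) (hX : ∀ t, MemLp (X t) 2 μ) {σ2 : ℝ}
    (hunc : ∀ t ≥ 1, ∀ s ≥ 1, t ≠ s → cov[X t, X s; μ] = 0)
    (hvar : ∀ t ≥ 1, Var[X t; μ] = σ2) (hα0 : 0 < α) (hα2 : α < 2) (n : ℕ) :
    Var[m (n + 2); μ] ≤ α / (2 - α) * σ2 + ((1 - α) ^ 2) ^ n * (σ2 - α / (2 - α) * σ2) := by
  have hfix : α ^ 2 * σ2 / (1 - (1 - α) ^ 2) = α / (2 - α) * σ2 := by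
    have : 2 - α ≠ 0 := by linarith
    rw [show 1 - (1 - α) ^ 2 = α * (2 - α) by ring]
    field_simp
  have hne : (1 - α) ^ 2 ≠ 1 := by
    intro h1
    rcases sq_eq_one_iff.1 h1 with h1 | h1 <;> linarith
  have hstep (n : ℕ) :
      Var[m (n + 2 + 1); μ] ≤ (1 - α) ^ 2 * Var[m (n + 2); μ] + α ^ 2 * σ2 := by
    rw [h.variance_succ hX hunc (n + 2) (by omega), hvar (n + 2) (by omega)]
  have := le_add_pow_mul_of_le_mul_add (u := fun n => Var[m (n + 2); μ]) (sq_nonneg (1 - α))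
    hne hstep n
  simpa [hfix, h.two_eq, hvar 1 le_rfl] using this

lemma abs_integral_sub_le (h : IsExpSmoothing α X m) (hX : ∀ t, MemLp (X t) 2 μ)
    {mstar : ℕ → ℝ} {K : ℝ} (hmean : ∀ t ≥ 1, μ[X t] = mstar t)
    (hLip : ∀ t ≥ 1, |mstar (t + 1) - mstar t| ≤ K) (hα0 : 0 < α) (hα1 : α ≤ 1) (n : ℕ) :
    |μ[m (n + 2)] - mstar (n + 1)| ≤ (1 - α) * K / α := by
  have h1α : 0 ≤ 1 - α := by linarith
  have hstep (n : ℕ) : |μ[m (n + 2 + 1)] - mstar (n + 2)|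
      ≤ (1 - α) * |μ[m (n + 2)] - mstar (n + 1)| + (1 - α) * K := by
    have hsucc := h.integral_succ hX (n + 2) (by omega)
    rw [hmean (n + 2) (by omega)] at hsucc
    calc |μ[m (n + 2 + 1)] - mstar (n + 2)|
        = |(1 - α) * (μ[m (n + 2)] - mstar (n + 1) - (mstar (n + 2) - mstar (n + 1)))| := by
          rw [hsucc]
          ring_nf
      _ = (1 - α) * |μ[m (n + 2)] - mstar (n + 1) - (mstar (n + 2) - mstar (n + 1))| := by
          rw [abs_mul, abs_of_nonneg h1α]
      _ ≤ (1 - α) * (|μ[m (n + 2)] - mstar (n + 1)| + K) := by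
          gcongr
          exact (abs_sub _ _).trans (by gcongr; exact hLip (n + 1) (by omega))
      _ = (1 - α) * |μ[m (n + 2)] - mstar (n + 1)| + (1 - α) * K := by ring
  have h0 : |μ[m 2] - mstar 1| ≤ (1 - α) * K / (1 - (1 - α)) := by
    have hK : 0 ≤ K := (abs_nonneg _).trans (hLip 1 le_rfl)
    rw [h.two_eq, hmean 1 le_rfl, sub_self, abs_zero]
    exact div_nonneg (mul_nonneg h1α hK) (by linarith)
  have := le_of_le_mul_add (u := fun n => |μ[m (n + 2)] - mstar (n + 1)|) h1α (by linarith)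
    hstep h0 n
  rwa [sub_sub_cancel] at this

end IsExpSmoothing

theorem ses_iid_bound_general {Ω : Type*} [MeasurableSpace Ω] (ℙ : Measure Ω)
    [IsProbabilityMeasure ℙ]
    (α K σ2 : ℝ) (hα : α ∈ Set.Ioo (0:ℝ) 1)
    (X : ℕ → Ω → ℝ) (mstar : ℕ → ℝ)
    (hX2 : ∀ t, MemLp (X t) 2 ℙ)
    (hmean : ∀ t ≥ 1, ∫ ω, X t ω ∂ℙ = mstar t)
    (hcov : ∀ t ≥ 1, ∀ s ≥ 1,
      ∫ ω, (X t ω - mstar t) * (X s ω - mstar s) ∂ℙ = if t = s then σ2 else 0)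
    (hLip : ∀ t ≥ 1, |mstar (t + 1) - mstar t| ≤ K)
    (mhat : ℕ → Ω → ℝ) (hinit : mhat 1 = X 1)
    (hrec : ∀ t ≥ 1, ∀ ω, mhat (t + 1) ω = (1 - α) * mhat t ω + α * X t ω) :
    Filter.limsup (fun t : ℕ => ∫ ω, (mhat (t + 1) ω - mstar t) ^ 2 ∂ℙ) Filter.atTop
      ≤ (α / (2 - α)) * σ2 + ((1 - α) ^ 2 / α ^ 2) * K ^ 2 := by
  obtain ⟨hα0, hα1⟩ := hα
  have hsm : IsExpSmoothing α X mhat := ⟨hinit, fun t ht => funext (hrec t ht)⟩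
  have hcovX : ∀ t ≥ 1, ∀ s ≥ 1,
      ProbabilityTheory.covariance (X t) (X s) ℙ = if t = s then σ2 else 0 := by
    intro t ht s hs
    rw [ProbabilityTheory.covariance, hmean t ht, hmean s hs, hcov t ht s hs]
  have hunc : ∀ t ≥ 1, ∀ s ≥ 1, t ≠ s → ProbabilityTheory.covariance (X t) (X s) ℙ = 0 :=
    fun t ht s hs hts => by rw [hcovX t ht s hs, if_neg hts]
  have hvar : ∀ t ≥ 1, ProbabilityTheory.variance (X t) ℙ = σ2 := fun t ht => by
    rw [← ProbabilityTheory.covariance_self (hX2 t).aemeasurable, hcovX t ht t ht, if_pos rfl]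
  refine limsup_le_of_le_add_pow_mul (M := σ2 - α / (2 - α) * σ2)
    (fun t => integral_nonneg fun ω => sq_nonneg _) (sq_nonneg (1 - α)) (by nlinarith)
    fun n => ?_
  rw [ProbabilityTheory.integral_sub_const_sq (hsm.memLp_two hX2 (n + 2) (by omega))]
  have hvariance := hsm.variance_le hX2 hunc hvar hα0 (by linarith) n
  have hbias : (∫ ω, mhat (n + 2) ω ∂ℙ - mstar (n + 1)) ^ 2 ≤ (1 - α) ^ 2 / α ^ 2 * K ^ 2 := by
    calc _ = |∫ ω, mhat (n + 2) ω ∂ℙ - mstar (n + 1)| ^ 2 := (sq_abs _).symm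
      _ ≤ ((1 - α) * K / α) ^ 2 := by
        gcongr
        exact hsm.abs_integral_sub_le hX2 hmean hLip hα0 hα1.le n
      _ = (1 - α) ^ 2 / α ^ 2 * K ^ 2 := by ring
  linarith

theorem ses_iid_bound {Ω : Type*} [MeasurableSpace Ω] (ℙ : Measure Ω)
    [IsProbabilityMeasure ℙ]
    (α K σ2 : ℝ) (hα : α ∈ Set.Ioo (0:ℝ) 1) (hK : 0 < K) (hσ2 : 0 < σ2)
    (X : ℕ → Ω → ℝ) (mstar : ℕ → ℝ)
    (hX2 : ∀ t, MemLp (X t) 2 ℙ)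
    (hmean : ∀ t ≥ 1, ∫ ω, X t ω ∂ℙ = mstar t)
    (hcov : ∀ t ≥ 1, ∀ s ≥ 1,
      ∫ ω, (X t ω - mstar t) * (X s ω - mstar s) ∂ℙ = if t = s then σ2 else 0)
    (hLip : ∀ t ≥ 1, |mstar (t + 1) - mstar t| ≤ K)
    (mhat : ℕ → Ω → ℝ) (hinit : mhat 1 = X 1)
    (hrec : ∀ t ≥ 1, ∀ ω, mhat (t + 1) ω = (1 - α) * mhat t ω + α * X t ω) :
    Filter.limsup (fun t : ℕ => ∫ ω, (mhat (t + 1) ω - mstar t) ^ 2 ∂ℙ) Filter.atTop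
      ≤ (α / (2 - α)) * σ2 + ((1 - α) ^ 2 / α ^ 2) * K ^ 2 :=
  ses_iid_bound_general ℙ α K σ2 hα X mstar hX2 hmean hcov hLip mhat hinit hrec
end
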